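/- Consider the closed-loop system: x̃ : ℝ → ℝⁿ and x̃_c : ℝ → ℝ^{nG} are differentiable and satisfy x̃'(t) = (J − R̃(x̃(t)))·Q·x̃(t) + g·ũ(t) and x̃_c'(t) = −k_I·𝓛·ũ_c(t), where ỹ(t) = gᵀQx̃(t), ỹ_c(t) = −𝓛·x̃_c(t), ũ(t) = −r·ỹ(t) − w⁻¹·ỹ_c(t), and ũ_c(t) = (w⁻¹)ᵀ·ỹ(t), with r, w ∈ ℝ^{nG×nG}, w invertible, k_I diagonal with positive entries, and 𝓛 symmetric. Assume the last nN-block q̃(t) of x̃(t) satisfies q̃_k(t) + q̄_k ≠ 0 for all k and t. Then the total storage H_t(t) = ½x̃(t)ᵀQx̃(t) + ½x̃_c(t)ᵀk_I⁻¹x̃_c(t) is differentiable with H_t'(t) = −(Qx̃(t))ᵀ·(R̃(x̃(t)) + g·r·gᵀ)·(Qx̃(t)) for all t. -/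

import Mathlib

/-!
Differentiating the two storage functions, symmetry of `Q` and `k_I⁻¹` turns each rate into a
single dot product. In the plant's rate the skew-symmetric `J` drops out, leaving the
dissipation `-(Qx̃)ᵀR̃(Qx̃)`, the damping injection `-ỹᵀrỹ` and the port power `-(w⁻¹ỹ_c)ᵀỹ`.
In the controller's rate, symmetry of `k_I` and `𝓛` lets `k_I` cancel against `k_I⁻¹`, leaving
`ỹᵀw⁻¹ỹ_c`: the interconnection through `w⁻¹` and `(w⁻¹)ᵀ` is power preserving, so the port
powers cancel.
-/

open Matrix

/-- Index type of the microgrid state: generator currents, line currents, bus charges. -/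
abbrev BIdx (nG nE nN : ℕ) := Fin nG ⊕ (Fin nE ⊕ Fin nN)

/-- The input matrix `g = [I; 0; 0]`. -/
noncomputable def gMat (nG nE nN : ℕ) : Matrix (BIdx nG nE nN) (Fin nG) ℝ :=
  Matrix.of fun i j =>
    match i with
    | Sum.inl i' => if i' = j then (1 : ℝ) else 0
    | Sum.inr _ => 0

/-- Block-diagonal matrix with three diagonal blocks. -/
noncomputable def bd3 {nG nE nN : ℕ} (A : Matrix (Fin nG) (Fin nG) ℝ)
    (B : Matrix (Fin nE) (Fin nE) ℝ) (D : Matrix (Fin nN) (Fin nN) ℝ) :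
    Matrix (BIdx nG nE nN) (BIdx nG nE nN) ℝ :=
  Matrix.fromBlocks A 0 0 (Matrix.fromBlocks B 0 0 D)

/-- `G_P(q̃) = diag (P_k C_k² / (q̄_k (q̃_k + q̄_k)))`. -/
noncomputable def GPm {nN : ℕ} (P cD qbar : Fin nN → ℝ) (qt : Fin nN → ℝ) :
    Matrix (Fin nN) (Fin nN) ℝ :=
  Matrix.diagonal fun k => P k * (cD k) ^ 2 / (qbar k * (qt k + qbar k))

/-- The state-dependent dissipation matrix
`R̃(z̃) = blockdiag(R_G + R_D, R_E, G − G_P(q̃))` of the incremental microgrid model. -/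
noncomputable def Rtil {nG nE nN : ℕ} (rG rD : Fin nG → ℝ) (rE : Fin nE → ℝ)
    (gD cD P qbar : Fin nN → ℝ) (z : BIdx nG nE nN → ℝ) :
    Matrix (BIdx nG nE nN) (BIdx nG nE nN) ℝ :=
  bd3 (Matrix.diagonal fun i => rG i + rD i) (Matrix.diagonal rE)
    (Matrix.diagonal gD - GPm P cD qbar fun k => z (Sum.inr (Sum.inr k)))

section Derivatives

variable {𝕜 : Type*} [NontriviallyNormedField 𝕜] {ι : Type*} [Fintype ι]
  {f g : 𝕜 → ι → 𝕜} {f' g' : ι → 𝕜} {t : 𝕜}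

theorem HasDerivAt.dotProduct (hf : HasDerivAt f f' t) (hg : HasDerivAt g g' t) :
    HasDerivAt (fun s => f s ⬝ᵥ g s) (f' ⬝ᵥ g t + f t ⬝ᵥ g') t :=
  (HasDerivAt.fun_sum fun i _ =>
    (hasDerivAt_pi.1 hf i).fun_mul (hasDerivAt_pi.1 hg i)).congr_deriv Finset.sum_add_distrib

theorem HasDerivAt.mulVec {κ : Type*} (A : Matrix κ ι 𝕜) (hf : HasDerivAt f f' t) :
    HasDerivAt (fun s => A *ᵥ f s) (A *ᵥ f') t :=
  hasDerivAt_pi.2 fun i =>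
    HasDerivAt.fun_sum fun j _ => (hasDerivAt_pi.1 hf j).const_mul (A i j)

theorem HasDerivAt.dotProduct_mulVec_self {A : Matrix ι ι 𝕜} (hA : A.IsSymm)
    (hf : HasDerivAt f f' t) :
    HasDerivAt (fun s => f s ⬝ᵥ (A *ᵥ f s)) (2 * (f' ⬝ᵥ (A *ᵥ f t))) t :=
  (hf.dotProduct (hf.mulVec A)).congr_deriv <| by
    rw [← dotProduct_transpose_mulVec A f', hA.eq, two_mul]

end Derivatives

theorem hasDerivAt_half_dotProduct_mulVec_self {ι : Type*} [Fintype ι] {A : Matrix ι ι ℝ}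
    (hA : A.IsSymm) {f : ℝ → ι → ℝ} {f' : ι → ℝ} {t : ℝ} (hf : HasDerivAt f f' t) :
    HasDerivAt (fun s => (1 / 2 : ℝ) * (f s ⬝ᵥ (A *ᵥ f s))) (f' ⬝ᵥ (A *ᵥ f t)) t :=
  ((hf.dotProduct_mulVec_self hA).const_mul (1 / 2 : ℝ)).congr_deriv (by ring)

section PowerBalance

variable {R : Type*} [CommRing R] {ι κ : Type*} [Fintype ι] [Fintype κ]

theorem mulVec_dotProduct_eq_dotProduct_transpose_mulVec (A : Matrix ι κ R) (u : κ → R)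
    (w : ι → R) : (A *ᵥ u) ⬝ᵥ w = u ⬝ᵥ (Aᵀ *ᵥ w) := by
  rw [dotProduct_comm, dotProduct_transpose_mulVec]

theorem dotProduct_mulVec_self_eq_zero_of_transpose_eq_neg [NoZeroDivisors R] [CharZero R]
    {J : Matrix ι ι R} (hJ : Jᵀ = -J) (y : ι → R) : y ⬝ᵥ (J *ᵥ y) = 0 := by
  have h := dotProduct_transpose_mulVec J y y
  rwa [hJ, neg_mulVec, dotProduct_neg, CharZero.neg_eq_self_iff] at h

theorem portHamiltonian_power_balance [NoZeroDivisors R] [CharZero R]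
    {J : Matrix ι ι R} (hJ : Jᵀ = -J) (Rd : Matrix ι ι R) (g : Matrix ι κ R) (r : Matrix κ κ R)
    (v : κ → R) (y : ι → R) :
    ((J - Rd) *ᵥ y + g *ᵥ (-(r *ᵥ (gᵀ *ᵥ y)) - v)) ⬝ᵥ y =
      -(y ⬝ᵥ ((Rd + g * r * gᵀ) *ᵥ y)) - (gᵀ *ᵥ y) ⬝ᵥ v := by
  set z := gᵀ *ᵥ y
  have hJy : (J *ᵥ y) ⬝ᵥ y = 0 := by
    rw [dotProduct_comm, dotProduct_mulVec_self_eq_zero_of_transpose_eq_neg hJ]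
  have hgy (u : κ → R) : (g *ᵥ u) ⬝ᵥ y = u ⬝ᵥ z :=
    mulVec_dotProduct_eq_dotProduct_transpose_mulVec g u y
  have hdamping : y ⬝ᵥ ((g * r * gᵀ) *ᵥ y) = (r *ᵥ z) ⬝ᵥ z := by
    rw [← mulVec_mulVec, ← mulVec_mulVec, dotProduct_comm, hgy]
  rw [add_mulVec, dotProduct_add, hdamping, add_dotProduct, sub_mulVec, sub_dotProduct, hJy, hgy,
    sub_dotProduct, neg_dotProduct, dotProduct_comm y, dotProduct_comm v]
  ring

theorem consensus_power_balance [DecidableEq κ] {K : Matrix κ κ R} (hK : K.IsSymm)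
    (hKdet : IsUnit K.det) {L : Matrix κ κ R} (hL : L.IsSymm) (M : Matrix κ κ R)
    (z xc : κ → R) :
    (-((K * L) *ᵥ (Mᵀ *ᵥ z))) ⬝ᵥ (K⁻¹ *ᵥ xc) = z ⬝ᵥ (M *ᵥ -(L *ᵥ xc)) := by
  rw [neg_dotProduct, mulVec_dotProduct_eq_dotProduct_transpose_mulVec,
    mulVec_dotProduct_eq_dotProduct_transpose_mulVec, transpose_transpose, transpose_mul, hK.eq,
    hL.eq, ← mulVec_mulVec, mulVec_mulVec _ K, mul_nonsing_inv K hKdet, one_mulVec, mulVec_neg,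
    dotProduct_neg]

end PowerBalance

theorem closed_loop_energy_balance_general
    (nG nE nN : ℕ)
    (rG rD : Fin nG → ℝ) (rE : Fin nE → ℝ) (gD cD : Fin nN → ℝ)
    (Q : Matrix (BIdx nG nE nN) (BIdx nG nE nN) ℝ) (hQsymm : Q.IsSymm)
    (J : Matrix (BIdx nG nE nN) (BIdx nG nE nN) ℝ) (hJ : Jᵀ = -J)
    (P qbar : Fin nN → ℝ)
    (kd : Fin nG → ℝ) (hkd : ∀ i, 0 < kd i)
    (L : Matrix (Fin nG) (Fin nG) ℝ) (hL : L.IsSymm)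
    (r w : Matrix (Fin nG) (Fin nG) ℝ)
    (xt : ℝ → (BIdx nG nE nN → ℝ)) (xc : ℝ → (Fin nG → ℝ))
    (hxdiff : ∀ t : ℝ, HasDerivAt xt
      ((J - Rtil rG rD rE gD cD P qbar (xt t)) *ᵥ (Q *ᵥ xt t) +
        gMat nG nE nN *ᵥ
          (-(r *ᵥ ((gMat nG nE nN)ᵀ *ᵥ (Q *ᵥ xt t))) - w⁻¹ *ᵥ (-(L *ᵥ xc t)))) t)
    (hxcdiff : ∀ t : ℝ, HasDerivAt xc
      (-((Matrix.diagonal kd * L) *ᵥ ((w⁻¹)ᵀ *ᵥ ((gMat nG nE nN)ᵀ *ᵥ (Q *ᵥ xt t))))) t) :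
    ∀ t : ℝ, HasDerivAt
      (fun s => (1 / 2 : ℝ) * ((xt s) ⬝ᵥ (Q *ᵥ xt s)) +
        (1 / 2 : ℝ) * ((xc s) ⬝ᵥ ((Matrix.diagonal kd)⁻¹ *ᵥ xc s)))
      (-((Q *ᵥ xt t) ⬝ᵥ
        ((Rtil rG rD rE gD cD P qbar (xt t) + gMat nG nE nN * r * (gMat nG nE nN)ᵀ) *ᵥ
          (Q *ᵥ xt t)))) t := by
  intro t
  have hK : IsUnit (diagonal kd).det :=
    (isUnit_iff_isUnit_det _).1 (isUnit_diagonal.2 (Pi.isUnit_iff.2 fun i => (hkd i).ne'.isUnit))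
  refine ((hasDerivAt_half_dotProduct_mulVec_self hQsymm (hxdiff t)).add
    (hasDerivAt_half_dotProduct_mulVec_self (isSymm_diagonal kd).inv (hxcdiff t))).congr_deriv ?_
  rw [portHamiltonian_power_balance hJ, consensus_power_balance (isSymm_diagonal kd) hK hL,
    sub_add_cancel]

/-- **energy balance, eq. (10).** Along the closed loop obtained by
interconnecting the incremental microgrid pH model with the consensus controller via
`ũ = −rỹ − w⁻¹ỹ_c`, `ũ_c = (w⁻¹)ᵀỹ`, the total storage
`H_t = ½x̃ᵀQx̃ + ½x̃_cᵀk_I⁻¹x̃_c` satisfies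
`H_t' = −(Qx̃)ᵀ(R̃(x̃) + g r gᵀ)(Qx̃)`. -/
theorem closed_loop_energy_balance
    (nG nE nN : ℕ) (hnG : 0 < nG) (hnE : 0 < nE) (hnN : 0 < nN)
    (rG rD : Fin nG → ℝ) (rE : Fin nE → ℝ) (gD cD : Fin nN → ℝ)
    (hrG : ∀ i, 0 < rG i) (hrD : ∀ i, 0 < rD i) (hrE : ∀ j, 0 < rE j)
    (hcD : ∀ k, 0 < cD k) (hgD : ∀ k, 0 ≤ gD k)
    (Q : Matrix (BIdx nG nE nN) (BIdx nG nE nN) ℝ) (hQsymm : Q.IsSymm) (hQpd : Q.PosDef)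
    (J : Matrix (BIdx nG nE nN) (BIdx nG nE nN) ℝ) (hJ : Jᵀ = -J)
    (P qbar : Fin nN → ℝ) (hqbar : ∀ k, qbar k ≠ 0)
    (kd : Fin nG → ℝ) (hkd : ∀ i, 0 < kd i)
    (L : Matrix (Fin nG) (Fin nG) ℝ) (hL : L.IsSymm)
    (r w : Matrix (Fin nG) (Fin nG) ℝ) (hw : IsUnit w.det)
    (xt : ℝ → (BIdx nG nE nN → ℝ)) (xc : ℝ → (Fin nG → ℝ))
    (hxdiff : ∀ t : ℝ, HasDerivAt xt
      ((J - Rtil rG rD rE gD cD P qbar (xt t)) *ᵥ (Q *ᵥ xt t) +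
        gMat nG nE nN *ᵥ
          (-(r *ᵥ ((gMat nG nE nN)ᵀ *ᵥ (Q *ᵥ xt t))) - w⁻¹ *ᵥ (-(L *ᵥ xc t)))) t)
    (hxcdiff : ∀ t : ℝ, HasDerivAt xc
      (-((Matrix.diagonal kd * L) *ᵥ ((w⁻¹)ᵀ *ᵥ ((gMat nG nE nN)ᵀ *ᵥ (Q *ᵥ xt t))))) t)
    (hdom : ∀ t : ℝ, ∀ k : Fin nN, xt t (Sum.inr (Sum.inr k)) + qbar k ≠ 0) :
    ∀ t : ℝ, HasDerivAt
      (fun s => (1 / 2 : ℝ) * ((xt s) ⬝ᵥ (Q *ᵥ xt s)) +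
        (1 / 2 : ℝ) * ((xc s) ⬝ᵥ ((Matrix.diagonal kd)⁻¹ *ᵥ xc s)))
      (-((Q *ᵥ xt t) ⬝ᵥ
        ((Rtil rG rD rE gD cD P qbar (xt t) + gMat nG nE nN * r * (gMat nG nE nN)ᵀ) *ᵥ
          (Q *ᵥ xt t)))) t :=
  closed_loop_energy_balance_general nG nE nN rG rD rE gD cD Q hQsymm J hJ P qbar kd hkd L hL r w xt
    xc hxdiff hxcdiff
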